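/- arXiv:1905.06593 — 4 statements merged into one kernel-verified Lean document; each statement's English description precedes it below -/
import Mathlib

section
/- Let f ∈ C¹(ℝ²), Ω ⊆ ℝ an open interval, and φ₁, φ₂ : Ω → ℝ continuous with φ₁(x) < φ₂(x). Suppose there is a continuous b : Ω → ℝ such that for all x ∈ Ω and all y ∈ (φ₁(x), φ₂(x)) one has ∂f/∂y(x,y) ≥ b(x) > 0. Let g : Ω → ℝ satisfy, for all x ∈ Ω, g(x) ∈ (φ₁(x), φ₂(x)) and g(x) − f(x,g(x))/b(x) ∈ (φ₁(x), φ₂(x)). Then there exists a unique function ξ : Ω → ℝ with ξ(x) ∈ (φ₁(x), φ₂(x)) and f(x, ξ(x)) = 0 for all x ∈ Ω; moreover |ξ(x) − g(x)| ≤ |f(x,g(x))/b(x)| for all x ∈ Ω. -/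
/-!
On each vertical line the map `t ↦ f x t` grows at rate at least `b x` on the strip, so it is
injective there, and the Newton-type step `g x - f x (g x) / b x` reaches at least as far as its
zero: `f x` changes sign between the two points, and the intermediate value theorem places the
zero between them.
-/

open Set

section DerivBoundedBelow

variable {h : ℝ → ℝ} {p q c : ℝ}

lemma differentiableOn_of_pos_le_deriv {s : Set ℝ} (hc : 0 < c) (hh : ∀ y ∈ s, c ≤ deriv h y) :
    DifferentiableOn ℝ h s := fun y hy =>
  (differentiableAt_of_deriv_ne_zero (hc.trans_le (hh y hy)).ne').differentiableWithinAt

lemma injOn_Ioo_of_pos_le_deriv (hc : 0 < c) (hh : ∀ y ∈ Ioo p q, c ≤ deriv h y) :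
    InjOn h (Ioo p q) :=
  (strictMonoOn_of_deriv_pos (convex_Ioo p q)
    (differentiableOn_of_pos_le_deriv hc hh).continuousOn
    (by rw [interior_Ioo]; exact fun y hy => hc.trans_le (hh y hy))).injOn

lemma exists_eq_zero_abs_sub_le_of_pos_le_deriv (hc : 0 < c)
    (hh : ∀ y ∈ Ioo p q, c ≤ deriv h y) {y₀ : ℝ} (hy₀ : y₀ ∈ Ioo p q)
    (hy₁ : y₀ - h y₀ / c ∈ Ioo p q) :
    ∃ y ∈ Ioo p q, h y = 0 ∧ |y - y₀| ≤ |h y₀ / c| := by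
  set y₁ := y₀ - h y₀ / c
  have hdiff := differentiableOn_of_pos_le_deriv hc hh
  have hseg : uIcc y₀ y₁ ⊆ Ioo p q := ordConnected_Ioo.uIcc_subset hy₀ hy₁
  have hgrowth : ∀ y ∈ Ioo p q, ∀ z ∈ Ioo p q, y ≤ z → c * (z - y) ≤ h z - h y :=
    (convex_Ioo p q).mul_sub_le_image_sub_of_le_deriv hdiff.continuousOn
      (by rw [interior_Ioo]; exact hdiff) (by rw [interior_Ioo]; exact hh)
  have hstep : c * (y₀ - y₁) = h y₀ := by
    simp only [y₁, sub_sub_cancel]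
    field_simp
  have hsign : 0 ∈ uIcc (h y₀) (h y₁) := by
    rcases le_total 0 (h y₀) with h0 | h0
    · have hle : y₁ ≤ y₀ := by nlinarith
      have := hgrowth y₁ hy₁ y₀ hy₀ hle
      exact mem_uIcc.2 (Or.inr ⟨by linarith, h0⟩)
    · have hle : y₀ ≤ y₁ := by nlinarith
      have := hgrowth y₀ hy₀ y₁ hy₁ hle
      exact mem_uIcc.2 (Or.inl ⟨h0, by linarith⟩)
  obtain ⟨y, hy, hy0⟩ := intermediate_value_uIcc (hdiff.continuousOn.mono hseg) hsign
  refine ⟨y, hseg hy, hy0, ?_⟩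
  calc |y - y₀| ≤ |y₁ - y₀| := abs_sub_left_of_mem_uIcc hy
    _ = |h y₀ / c| := by rw [sub_sub_cancel_left, abs_neg]

end DerivBoundedBelow

theorem stmt_0_general (a b : ℝ) (f : ℝ → ℝ → ℝ)
    (φ₁ φ₂ bd g : ℝ → ℝ)
    (hder : ∀ x ∈ Ioo a b, ∀ y ∈ Ioo (φ₁ x) (φ₂ x),
      deriv (fun t => f x t) y ≥ bd x ∧ 0 < bd x)
    (hg : ∀ x ∈ Ioo a b, g x ∈ Ioo (φ₁ x) (φ₂ x) ∧
      g x - f x (g x) / bd x ∈ Ioo (φ₁ x) (φ₂ x)) :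
    ∃ ξ : ℝ → ℝ,
      (∀ x ∈ Ioo a b, ξ x ∈ Ioo (φ₁ x) (φ₂ x) ∧ f x (ξ x) = 0 ∧
        |ξ x - g x| ≤ |f x (g x) / bd x|) ∧
      (∀ ξ' : ℝ → ℝ, (∀ x ∈ Ioo a b, ξ' x ∈ Ioo (φ₁ x) (φ₂ x) ∧ f x (ξ' x) = 0) →
        ∀ x ∈ Ioo a b, ξ' x = ξ x) := by
  have hbd : ∀ x ∈ Ioo a b, 0 < bd x := fun x hx => (hder x hx _ (hg x hx).1).2
  have hroot : ∀ x, ∃ y, x ∈ Ioo a b → y ∈ Ioo (φ₁ x) (φ₂ x) ∧ f x y = 0 ∧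
      |y - g x| ≤ |f x (g x) / bd x| := by
    intro x
    by_cases hx : x ∈ Ioo a b
    · obtain ⟨y, hy⟩ := exists_eq_zero_abs_sub_le_of_pos_le_deriv (hbd x hx)
        (fun y hy => (hder x hx y hy).1) (hg x hx).1 (hg x hx).2
      exact ⟨y, fun _ => hy⟩
    · exact ⟨0, fun hx' => absurd hx' hx⟩
  choose ξ hξ using hroot
  refine ⟨ξ, hξ, fun ξ' hξ' x hx => ?_⟩
  exact injOn_Ioo_of_pos_le_deriv (hbd x hx) (fun y hy => (hder x hx y hy).1)
    (hξ' x hx).1 (hξ x hx).1 ((hξ' x hx).2.trans (hξ x hx).2.1.symm)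

/-- Quantitative implicit function theorem (increasing case). -/
theorem stmt_0 (a b : ℝ) (f : ℝ → ℝ → ℝ)
    (hf : ContDiff ℝ 1 (fun p : ℝ × ℝ => f p.1 p.2))
    (φ₁ φ₂ bd g : ℝ → ℝ)
    (hφ₁ : ContinuousOn φ₁ (Ioo a b)) (hφ₂ : ContinuousOn φ₂ (Ioo a b))
    (hbd : ContinuousOn bd (Ioo a b))
    (hlt : ∀ x ∈ Ioo a b, φ₁ x < φ₂ x)
    (hder : ∀ x ∈ Ioo a b, ∀ y ∈ Ioo (φ₁ x) (φ₂ x),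
      deriv (fun t => f x t) y ≥ bd x ∧ 0 < bd x)
    (hg : ∀ x ∈ Ioo a b, g x ∈ Ioo (φ₁ x) (φ₂ x) ∧
      g x - f x (g x) / bd x ∈ Ioo (φ₁ x) (φ₂ x)) :
    ∃ ξ : ℝ → ℝ,
      (∀ x ∈ Ioo a b, ξ x ∈ Ioo (φ₁ x) (φ₂ x) ∧ f x (ξ x) = 0 ∧
        |ξ x - g x| ≤ |f x (g x) / bd x|) ∧
      (∀ ξ' : ℝ → ℝ, (∀ x ∈ Ioo a b, ξ' x ∈ Ioo (φ₁ x) (φ₂ x) ∧ f x (ξ' x) = 0) →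
        ∀ x ∈ Ioo a b, ξ' x = ξ x) :=
  stmt_0_general a b f φ₁ φ₂ bd g hder hg
end

section
/- Let ρs, Hs, ρf, μ, α, Δt, β, ψ, λ be positive reals and χ(y) the quartic polynomial with coefficients a₄ = (ρsHs/Δt²)(1 + αΔt/(ρfμ)), a₃ = −2αρsHs/(ρfμΔt) + (αΔt/(ρfμ))(β + ψλ) + α/Δt − 4ρsHs/Δt², a₂ = αρsHs/(ρfμΔt) − 2α/Δt + 6ρsHs/Δt², a₁ = α/Δt − 4ρsHs/Δt², a₀ = ρsHs/Δt². If ρsHs < αΔt(4ρfμ + Δt²(β + ψλ))/(16ρfμ + 4αΔt), then χ has a real root ȳ with ȳ < −1. -/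
open Polynomial Filter Set

/-- Instability: under the condition on ρsHs, χ has a real root ȳ < −1. -/
theorem stmt_4 (ρs Hs ρf μ α Δt β ψ lam : ℝ)
    (hρs : 0 < ρs) (hHs : 0 < Hs) (hρf : 0 < ρf) (hμ : 0 < μ)
    (hα : 0 < α) (hΔt : 0 < Δt) (hβ : 0 < β) (hψ : 0 < ψ) (hlam : 0 < lam)
    (hcond : ρs * Hs < α * Δt * (4 * ρf * μ + Δt ^ 2 * (β + ψ * lam))
      / (16 * ρf * μ + 4 * α * Δt)) :
    ∃ y : ℝ, y < -1 ∧
      (ρs * Hs / Δt ^ 2 * (1 + α * Δt / (ρf * μ))) * y ^ 4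
        + (-(2 * α * ρs * Hs) / (ρf * μ * Δt) + α * Δt / (ρf * μ) * (β + ψ * lam)
            + α / Δt - 4 * ρs * Hs / Δt ^ 2) * y ^ 3
        + (α * ρs * Hs / (ρf * μ * Δt) - 2 * α / Δt + 6 * ρs * Hs / Δt ^ 2) * y ^ 2
        + (α / Δt - 4 * ρs * Hs / Δt ^ 2) * y
        + ρs * Hs / Δt ^ 2 = 0 := by
  set c4 : ℝ := ρs * Hs / Δt ^ 2 * (1 + α * Δt / (ρf * μ)) with hc4
  set c3 : ℝ := -(2 * α * ρs * Hs) / (ρf * μ * Δt) + α * Δt / (ρf * μ) * (β + ψ * lam)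
      + α / Δt - 4 * ρs * Hs / Δt ^ 2 with hc3
  set c2 : ℝ := α * ρs * Hs / (ρf * μ * Δt) - 2 * α / Δt + 6 * ρs * Hs / Δt ^ 2 with hc2
  set c1 : ℝ := α / Δt - 4 * ρs * Hs / Δt ^ 2 with hc1
  set c0 : ℝ := ρs * Hs / Δt ^ 2 with hc0
  set f : ℝ → ℝ := fun y => c4 * y ^ 4 + c3 * y ^ 3 + c2 * y ^ 2 + c1 * y + c0 with hf
  have hΔt2 : (0:ℝ) < Δt ^ 2 := by positivity
  have hρfμ : (0:ℝ) < ρf * μ := by positivity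
  have hc4pos : 0 < c4 := by rw [hc4]; positivity
  -- χ(-1) < 0
  have hden : (0:ℝ) < 16 * ρf * μ + 4 * α * Δt := by positivity
  have hcond' : ρs * Hs * (16 * ρf * μ + 4 * α * Δt)
      < α * Δt * (4 * ρf * μ + Δt ^ 2 * (β + ψ * lam)) := by
    have := (lt_div_iff₀ hden).mp hcond
    linarith
  have hfneg : f (-1) < 0 := by
    have key : f (-1) * (ρf * μ * Δt ^ 2)
        = ρs * Hs * (16 * ρf * μ + 4 * α * Δt)
          - α * Δt * (4 * ρf * μ + Δt ^ 2 * (β + ψ * lam)) := by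
      rw [hf, hc4, hc3, hc2, hc1, hc0]
      field_simp
      ring
    nlinarith [mul_pos hρfμ hΔt2]
  -- f tends to +∞ as y → -∞, via the polynomial q(x) = f(-x)
  set q : ℝ[X] := C c4 * X ^ 4 - C c3 * X ^ 3 + C c2 * X ^ 2 - C c1 * X + C c0 with hq
  have hqeval : ∀ x : ℝ, q.eval x = f (-x) := by
    intro x; rw [hq, hf]; simp; ring
  have hdeg : q.natDegree = 4 := by
    rw [hq]; compute_degree!
    exact ne_of_gt hc4pos
  have hdeg' : 0 < q.degree := by
    rw [q.degree_eq_natDegree (fun h => by simp [h] at hdeg), hdeg]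
    norm_num
  have hlead : q.leadingCoeff = c4 := by
    rw [Polynomial.leadingCoeff, hdeg, hq]
    simp [coeff_X, coeff_one]
  have htends : Tendsto (fun x => q.eval x) atTop atTop :=
    q.tendsto_atTop_of_leadingCoeff_nonneg hdeg' (by rw [hlead]; exact hc4pos.le)
  obtain ⟨x, hx1, hxpos⟩ :=
    ((eventually_gt_atTop (1:ℝ)).and (htends.eventually_gt_atTop 0)).exists
  have hfb : 0 < f (-x) := by rw [← hqeval]; exact hxpos
  have hblt : -x < -1 := by linarith
  -- IVT
  have hcont : ContinuousOn f (Icc (-x) (-1)) := by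
    apply Continuous.continuousOn; rw [hf]
    exact ((((continuous_const.mul (continuous_pow 4)).add
      (continuous_const.mul (continuous_pow 3))).add
      (continuous_const.mul (continuous_pow 2))).add
      (continuous_const.mul continuous_id)).add continuous_const
  have h0mem : (0:ℝ) ∈ Icc (f (-1)) (f (-x)) := ⟨hfneg.le, hfb.le⟩
  obtain ⟨y, hymem, hy0⟩ := intermediate_value_Icc' hblt.le hcont h0mem
  refine ⟨y, ?_, ?_⟩
  · rcases lt_or_eq_of_le hymem.2 with h | h
    · exact h
    · exfalso; rw [h] at hy0; rw [hy0] at hfneg; exact lt_irrefl 0 hfneg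
  · simpa [hf] using hy0
end

section
/- Let ρs, Hs, ρf, μ, Δt, β, ψ, λ be positive reals with ρsHs < ρfμ and α > 4ρfμ·ρsHs/(Δt(ρfμ − ρsHs)). Then ρsHs < αΔt(4ρfμ + Δt²(β + ψλ))/(16ρfμ + 4αΔt). -/
/-- Condition (iii) of the Discussion implies the instability condition. -/
theorem stmt_7 (ρs Hs ρf μ α Δt β ψ lam : ℝ)
    (hρs : 0 < ρs) (hHs : 0 < Hs) (hρf : 0 < ρf) (hμ : 0 < μ)
    (hα : 0 < α) (hΔt : 0 < Δt) (hβ : 0 < β) (hψ : 0 < ψ) (hlam : 0 < lam)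
    (h1 : ρs * Hs < ρf * μ)
    (h2 : α > 4 * ρf * μ * (ρs * Hs) / (Δt * (ρf * μ - ρs * Hs))) :
    ρs * Hs < α * Δt * (4 * ρf * μ + Δt ^ 2 * (β + ψ * lam))
      / (16 * ρf * μ + 4 * α * Δt) := by
  have hden : 0 < 16 * ρf * μ + 4 * α * Δt := by positivity
  rw [lt_div_iff₀ hden]
  have hd2 : 0 < Δt * (ρf * μ - ρs * Hs) := by
    have := sub_pos.mpr h1; positivity
  rw [gt_iff_lt, div_lt_iff₀ hd2] at h2
  nlinarith [mul_pos hΔt (mul_pos (mul_pos hΔt hΔt) (add_pos hβ (mul_pos hψ hlam))), mul_pos hα hΔt]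
end

section
/- Let A, B, C > 0. Suppose u : (0,δ) → ℝ satisfies u(z) = (A/2)z + O(z²) as z → 0⁺, and define v²(z) = (4u(z)³ + 3Au(z)²z + 2u(z)z(A + B) + ACz³)/(4u(z) + Az). Then v²(z) = ((A + B)/3)z + O(z²), and (1 + u(z))² + v²(z) = 1 + Az + ((A + B)/3)z + O(z²) as z → 0⁺. In particular there exists δ₃ > 0 such that (1 + u(z))² + v²(z) > 1 for 0 < z < δ₃. -/
/-!
Write `w = u - (A/2) z = O(z²)`. The numerator of `v² - ((A+B)/3) z` is
`4u³ + 3Au²z + ACz³ + (2/3)(A+B) z w = O(z³)`, while the denominator `4u + Az = 3Az + 4w` is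
asymptotic to `3Az`; hence the quotient is `O(z²)`. Adding `(1+u)² = 1 + Az + 2w + u²` gives the
expansion of the squared modulus, whose linear coefficient `A + (A+B)/3` is positive, so it
exceeds `1` for small `z > 0`.
-/

open Filter Asymptotics Topology

lemma isLittleO_sq_id_nhdsGT_zero : (fun z : ℝ => z ^ 2) =o[𝓝[>] 0] fun z => z :=
  (isLittleO_pow_id one_lt_two).mono nhdsWithin_le_nhds

lemma eventually_pos_of_isBigO_sub_const_mul {f : ℝ → ℝ} {c : ℝ} (hc : 0 < c)
    (h : (fun z => f z - c * z) =O[𝓝[>] 0] fun z => z ^ 2) : ∀ᶠ z in 𝓝[>] 0, 0 < f z := by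
  filter_upwards [(h.trans_isLittleO isLittleO_sq_id_nhdsGT_zero).def (half_pos hc),
    self_mem_nhdsWithin] with z hz (hz0 : 0 < z)
  rw [Real.norm_eq_abs, Real.norm_eq_abs, abs_of_pos hz0] at hz
  nlinarith [(abs_le.mp hz).1]

lemma isBigO_div_of_isBigO_sub_const_mul {N D : ℝ → ℝ} {a : ℝ} (ha : a ≠ 0)
    (hN : N =O[𝓝[>] 0] fun z => z ^ 3)
    (hD : (fun z => D z - a * z) =O[𝓝[>] 0] fun z => z ^ 2) :
    (fun z => N z / D z) =O[𝓝[>] 0] fun z => z ^ 2 := by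
  have hequiv : D ~[𝓝[>] 0] fun z => a * z :=
    (hD.trans_isLittleO isLittleO_sq_id_nhdsGT_zero).trans_isBigO (isBigO_self_const_mul ha _ _)
  have hinv : (fun z => (D z)⁻¹) =O[𝓝[>] 0] fun z => (a * z)⁻¹ := hequiv.inv.isBigO
  refine (hN.mul hinv).congr' (Eventually.of_forall fun z => (div_eq_mul_inv _ _).symm) ?_
    |>.trans (isBigO_const_mul_self a⁻¹ _ _)
  filter_upwards [self_mem_nhdsWithin] with z (hz : 0 < z)
  field_simp

lemma isBigO_id_of_isBigO_sub_const_mul {u : ℝ → ℝ} {a : ℝ}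
    (hu : (fun z => u z - a * z) =O[𝓝[>] 0] fun z => z ^ 2) : u =O[𝓝[>] 0] fun z => z :=
  ((hu.trans_isLittleO isLittleO_sq_id_nhdsGT_zero).isBigO.add
    (isBigO_const_mul_self a _ _)).congr_left fun z => by ring

noncomputable def vSq (A B C u z : ℝ) : ℝ :=
  (4 * u ^ 3 + 3 * A * u ^ 2 * z + 2 * u * z * (A + B) + A * C * z ^ 3) / (4 * u + A * z)

lemma vSq_sub_eq_div (A B C u z : ℝ) (hD : 4 * u + A * z ≠ 0) :
    vSq A B C u z - (A + B) / 3 * z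
      = (4 * u ^ 3 + 3 * A * u ^ 2 * z + A * C * z ^ 3 + 2 / 3 * (A + B) * z * (u - A / 2 * z))
        / (4 * u + A * z) := by
  rw [vSq]
  field_simp
  ring

section

variable {A : ℝ} (B C : ℝ) {u : ℝ → ℝ}

lemma isBigO_vSq_denom_sub (hu : (fun z => u z - A / 2 * z) =O[𝓝[>] 0] fun z => z ^ 2) :
    (fun z => (4 * u z + A * z) - 3 * A * z) =O[𝓝[>] 0] fun z => z ^ 2 :=
  (hu.const_mul_left 4).congr_left fun z => by ring

lemma isBigO_vSq_numer (hu : (fun z => u z - A / 2 * z) =O[𝓝[>] 0] fun z => z ^ 2) :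
    (fun z => 4 * u z ^ 3 + 3 * A * u z ^ 2 * z + A * C * z ^ 3
        + 2 / 3 * (A + B) * z * (u z - A / 2 * z)) =O[𝓝[>] 0] fun z => z ^ 3 := by
  have hu1 := isBigO_id_of_isBigO_sub_const_mul hu
  have hu3 : (fun z => u z ^ 3) =O[𝓝[>] 0] fun z => z ^ 3 := hu1.pow 3
  have hu2z : (fun z => u z ^ 2 * z) =O[𝓝[>] 0] fun z => z ^ 3 :=
    ((hu1.pow 2).mul (isBigO_refl _ _)).congr_right fun z => by ring
  have hzw : (fun z => z * (u z - A / 2 * z)) =O[𝓝[>] 0] fun z => z ^ 3 :=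
    ((isBigO_refl _ _).mul hu).congr_right fun z => by ring
  exact ((((hu3.const_mul_left 4).add (hu2z.const_mul_left (3 * A))).add
    ((isBigO_refl _ _).const_mul_left (A * C))).add
    (hzw.const_mul_left (2 / 3 * (A + B)))).congr_left fun z => by ring

lemma isBigO_vSq_sub (hA : 0 < A)
    (hu : (fun z => u z - A / 2 * z) =O[𝓝[>] 0] fun z => z ^ 2) :
    (fun z => vSq A B C (u z) z - (A + B) / 3 * z) =O[𝓝[>] 0] fun z => z ^ 2 := by
  have hD := isBigO_vSq_denom_sub hu
  refine (isBigO_div_of_isBigO_sub_const_mul (by positivity) (isBigO_vSq_numer B C hu) hD).congr'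
    ?_ EventuallyEq.rfl
  filter_upwards [eventually_pos_of_isBigO_sub_const_mul (by positivity : 0 < 3 * A) hD] with z hz
  exact (vSq_sub_eq_div A B C (u z) z hz.ne').symm

lemma isBigO_modSq_sub (hA : 0 < A)
    (hu : (fun z => u z - A / 2 * z) =O[𝓝[>] 0] fun z => z ^ 2) :
    (fun z => (1 + u z) ^ 2 + vSq A B C (u z) z - (1 + A * z + (A + B) / 3 * z))
      =O[𝓝[>] 0] fun z => z ^ 2 :=
  ((isBigO_vSq_sub B C hA hu).add ((hu.const_mul_left 2).add
    ((isBigO_id_of_isBigO_sub_const_mul hu).pow 2))).congr_left fun z => by ring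

end

theorem stmt_14_general (A B C : ℝ) (hA : 0 < A) (hB : 0 < B)
    (u : ℝ → ℝ)
    (hu : (fun z => u z - A / 2 * z) =O[nhdsWithin 0 (Set.Ioi 0)] fun z => z ^ 2) :
    (((fun z => (4 * u z ^ 3 + 3 * A * u z ^ 2 * z + 2 * u z * z * (A + B) + A * C * z ^ 3)
          / (4 * u z + A * z) - (A + B) / 3 * z)
        =O[nhdsWithin 0 (Set.Ioi 0)] fun z => z ^ 2)
      ∧ ((fun z => (1 + u z) ^ 2
            + (4 * u z ^ 3 + 3 * A * u z ^ 2 * z + 2 * u z * z * (A + B) + A * C * z ^ 3)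
              / (4 * u z + A * z)
            - (1 + A * z + (A + B) / 3 * z))
          =O[nhdsWithin 0 (Set.Ioi 0)] fun z => z ^ 2)
      ∧ ∃ δ₃ > 0, ∀ z : ℝ, 0 < z → z < δ₃ →
          1 < (1 + u z) ^ 2
            + (4 * u z ^ 3 + 3 * A * u z ^ 2 * z + 2 * u z * z * (A + B) + A * C * z ^ 3)
              / (4 * u z + A * z)) := by
  have hmod := isBigO_modSq_sub B C hA hu
  have hgt : ∀ᶠ z in 𝓝[>] 0, 0 < (1 + u z) ^ 2 + vSq A B C (u z) z - 1 :=
    eventually_pos_of_isBigO_sub_const_mul (by positivity : 0 < A + (A + B) / 3)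
      (hmod.congr_left fun z => by ring)
  obtain ⟨δ₃, hδ₃, hsub⟩ := mem_nhdsGT_iff_exists_Ioo_subset.mp hgt
  exact ⟨isBigO_vSq_sub B C hA hu, hmod, δ₃, hδ₃,
    fun z hz hzδ => sub_pos.mp (hsub ⟨hz, hzδ⟩)⟩

/-- Asymptotic squared modulus of the first root pair. -/
theorem stmt_14 (A B C δ : ℝ) (hA : 0 < A) (hB : 0 < B) (hC : 0 < C) (hδ : 0 < δ)
    (u : ℝ → ℝ)
    (hu : (fun z => u z - A / 2 * z) =O[nhdsWithin 0 (Set.Ioi 0)] fun z => z ^ 2) :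
    (((fun z => (4 * u z ^ 3 + 3 * A * u z ^ 2 * z + 2 * u z * z * (A + B) + A * C * z ^ 3)
          / (4 * u z + A * z) - (A + B) / 3 * z)
        =O[nhdsWithin 0 (Set.Ioi 0)] fun z => z ^ 2)
      ∧ ((fun z => (1 + u z) ^ 2
            + (4 * u z ^ 3 + 3 * A * u z ^ 2 * z + 2 * u z * z * (A + B) + A * C * z ^ 3)
              / (4 * u z + A * z)
            - (1 + A * z + (A + B) / 3 * z))
          =O[nhdsWithin 0 (Set.Ioi 0)] fun z => z ^ 2)
      ∧ ∃ δ₃ > 0, ∀ z : ℝ, 0 < z → z < δ₃ →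
          1 < (1 + u z) ^ 2
            + (4 * u z ^ 3 + 3 * A * u z ^ 2 * z + 2 * u z * z * (A + B) + A * C * z ^ 3)
              / (4 * u z + A * z)) :=
  stmt_14_general A B C hA hB u hu
end
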